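/- arXiv:1610.09300 — 2 statements merged into one kernel-verified Lean document; each statement's English description precedes it below -/
import Mathlib

section
/- Let V = ℝ^{K×n₁} × ℝ^{n₁×d} and let Φ : V → ℝ be differentiable with ∇Φ(w,u) having strictly positive entries for all (w,u) ∈ S_{++}. Then (w*,u*) ∈ S_{++} is a constrained critical point of Φ on S_{++} — i.e., there exist scalars λ_1,…,λ_{K+1} such that ∇_{w_j}Φ(w*,u*) = λ_j ψ_{p_w}(w*_j) for all j ∈ [K] and ∇_u Φ(w*,u*) = λ_{K+1} ψ_{p_u}(u*) — if and only if (w*,u*) is a fixed point of G^Φ, i.e. G^Φ(w*,u*) = (w*,u*). -/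
noncomputable section

open Real Filter Topology

/-- Parameter space of a one-hidden-layer network: pairs `(w, u)`. -/
abbrev PV (K n1 d : ℕ) : Type :=
  (Fin K → Fin n1 → ℝ) × (Fin n1 → Fin d → ℝ)

/-- Entrywise `p`-norm of a vector. -/
def pnorm {ι : Type} [Fintype ι] (p : ℝ) (x : ι → ℝ) : ℝ :=
  (∑ i, |x i| ^ p) ^ (1 / p)

/-- Entrywise `p`-norm of a matrix. -/
def pnormM {ι κ : Type} [Fintype ι] [Fintype κ] (p : ℝ) (x : ι → κ → ℝ) : ℝ :=
  (∑ i, ∑ j, |x i j| ^ p) ^ (1 / p)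

/-- Hölder conjugate `p' = p/(p-1)`. -/
def hconj (p : ℝ) : ℝ := p / (p - 1)

/-- `ψ_p(x) = sign(x) |x|^{p-1}`. -/
def psi (p x : ℝ) : ℝ := Real.sign x * |x| ^ (p - 1)

/-- The constraint set `S₊`. -/
def Splus (K n1 d : ℕ) (pw pu ρw ρu : ℝ) : Set (PV K n1 d) :=
  {z | (∀ i j, 0 ≤ z.1 i j) ∧ (∀ a b, 0 ≤ z.2 a b) ∧
    (∀ i, pnorm pw (z.1 i) = ρw) ∧ pnormM pu z.2 = ρu}

/-- The constraint set `S₊₊` (strictly positive entries). -/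
def Spp (K n1 d : ℕ) (pw pu ρw ρu : ℝ) : Set (PV K n1 d) :=
  {z | (∀ i j, 0 < z.1 i j) ∧ (∀ a b, 0 < z.2 a b) ∧
    (∀ i, pnorm pw (z.1 i) = ρw) ∧ pnormM pu z.2 = ρu}

/-- The set `B₊₊` (strictly positive entries, norms at most `ρ`). -/
def Bpp (K n1 d : ℕ) (pw pu ρw ρu : ℝ) : Set (PV K n1 d) :=
  {z | (∀ i j, 0 < z.1 i j) ∧ (∀ a b, 0 < z.2 a b) ∧
    (∀ i, pnorm pw (z.1 i) ≤ ρw) ∧ pnormM pu z.2 ≤ ρu}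

/-- Coordinate direction for the entry `w_{a,b}`. -/
def eW {K n1 d : ℕ} (a : Fin K) (b : Fin n1) : PV K n1 d :=
  ((fun i j => if i = a ∧ j = b then 1 else 0), 0)

/-- Coordinate direction for the entry `u_{a,b}`. -/
def eU {K n1 d : ℕ} (a : Fin n1) (b : Fin d) : PV K n1 d :=
  (0, fun i j => if i = a ∧ j = b then 1 else 0)

/-- Partial derivative `∂Φ/∂w_{a,b}`. -/
def gradW {K n1 d : ℕ} (Φ : PV K n1 d → ℝ) (z : PV K n1 d) (a : Fin K) (b : Fin n1) : ℝ :=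
  fderiv ℝ Φ z (eW a b)

/-- Partial derivative `∂Φ/∂u_{a,b}`. -/
def gradU {K n1 d : ℕ} (Φ : PV K n1 d → ℝ) (z : PV K n1 d) (a : Fin n1) (b : Fin d) : ℝ :=
  fderiv ℝ Φ z (eU a b)

/-- The power-iteration map `G^Φ`. -/
def GPhi {K n1 d : ℕ} (pw pu ρw ρu : ℝ) (Φ : PV K n1 d → ℝ) (z : PV K n1 d) : PV K n1 d :=
  ((fun i j => ρw * psi (hconj pw) (gradW Φ z i j) /
      pnorm pw (fun j' => psi (hconj pw) (gradW Φ z i j'))),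
    fun a b => ρu * psi (hconj pu) (gradU Φ z a b) /
      pnormM pu (fun a' b' => psi (hconj pu) (gradU Φ z a' b')))

/-- One-hidden-layer network `f_r(w,u)(x)`. -/
def net {K n1 d : ℕ} (α : Fin n1 → ℝ) (w : Fin K → Fin n1 → ℝ) (u : Fin n1 → Fin d → ℝ)
    (x : Fin d → ℝ) (r : Fin K) : ℝ :=
  ∑ l, w r l * (∑ m, u l m * x m) ^ α l

/-- Cross-entropy loss. -/
def loss {K : ℕ} (y : Fin K) (g : Fin K → ℝ) : ℝ :=
  -g y + Real.log (∑ j, Real.exp (g j))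

/-- The objective `Φ`. -/
def Phi {K n1 d n : ℕ} (α : Fin n1 → ℝ) (x : Fin n → Fin d → ℝ) (y : Fin n → Fin K)
    (ε : ℝ) (z : PV K n1 d) : ℝ :=
  (1 / (n : ℝ)) * ∑ i, (-loss (y i) (net α z.1 z.2 (x i)) + ∑ r, net α z.1 z.2 (x i) r)
    + ε * ((∑ r, ∑ l, z.1 r l) + ∑ l, ∑ m, z.2 l m)

/-- Spectral radius of a real square matrix: maximum modulus of its (complex) eigenvalues. -/
def specRad {m : ℕ} (A : Matrix (Fin m) (Fin m) ℝ) : ℝ :=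
  sSup {r : ℝ | ∃ μ : ℂ, μ ∈ spectrum ℂ (A.map Complex.ofReal) ∧ r = ‖μ‖}

/-- Maximum of `g` over `Fin n`, `n > 0`. -/
def finMax {n : ℕ} (hn : 0 < n) (g : Fin n → ℝ) : ℝ :=
  Finset.univ.sup' (Finset.univ_nonempty_iff.mpr (Fin.pos_iff_nonempty.mp hn)) g

/-- Weighted Thompson metric `μ` with weights `γ`. -/
def thomW {K n1 d : ℕ} (γ : Fin (K + 1) → ℝ) (z z' : PV K n1 d) : ℝ :=
  (∑ i : Fin K, γ i.castSucc *
      ‖(fun j : Fin n1 => Real.log (z.1 i j) - Real.log (z'.1 i j))‖)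
    + γ (Fin.last K) *
      ‖(fun (a : Fin n1) (b : Fin d) => Real.log (z.2 a b) - Real.log (z'.2 a b))‖

/-- The function `Ψ^α_{p,q}` from the paper. -/
def PsiF {r : ℕ} (α : Fin r → ℝ) (p q : ℝ) (δ : Fin r → ℝ) (t : ℝ) : ℝ :=
  let J : Finset (Fin r) := Finset.univ.filter fun l => α l * p ≤ q
  let Jc : Finset (Fin r) := Finset.univ.filter fun l => q < α l * p
  let ab : ℝ := if h : J.Nonempty then J.inf' h α else 0
  ((∑ l ∈ J, (δ l * t ^ α l) ^ (p * q / (q - ab * p))) ^ (1 - ab * p / q)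
    + if h : Jc.Nonempty then Jc.sup' h fun j => (δ j * t ^ α j) ^ p else 0) ^ (1 / p)

end

/-! On positive reals `ψ_p` and `ψ_{p'}` are mutually inverse and multiplicative. Hence, blockwise,
`g = c ψ_p(v)` holds iff `ψ_{p'}(g)` is the multiple `ψ_{p'}(c) v` of `v`, and a positive multiple of
`v` rescaled to the `p`-norm of `v` is `v` itself. -/

section Psi

variable {p x y : ℝ}

theorem psi_of_pos (hx : 0 < x) : psi p x = x ^ (p - 1) := by
  simp [psi, Real.sign_of_pos hx, abs_of_pos hx]

theorem psi_pos (hx : 0 < x) : 0 < psi p x := by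
  rw [psi_of_pos hx]
  exact Real.rpow_pos_of_pos hx _

theorem psi_mul_of_pos (hx : 0 < x) (hy : 0 < y) : psi p (x * y) = psi p x * psi p y := by
  rw [psi_of_pos (mul_pos hx hy), psi_of_pos hx, psi_of_pos hy, Real.mul_rpow hx.le hy.le]

theorem sub_one_mul_hconj_sub_one (hp : 1 < p) : (p - 1) * (hconj p - 1) = 1 := by
  have : p - 1 ≠ 0 := by linarith
  unfold hconj
  field_simp
  ring

theorem psi_hconj_psi_of_pos (hp : 1 < p) (hx : 0 < x) : psi (hconj p) (psi p x) = x := by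
  rw [psi_of_pos (psi_pos hx), psi_of_pos hx, ← Real.rpow_mul hx.le,
    sub_one_mul_hconj_sub_one hp, Real.rpow_one]

theorem psi_psi_hconj_of_pos (hp : 1 < p) (hx : 0 < x) : psi p (psi (hconj p) x) = x := by
  rw [psi_of_pos (psi_pos hx), psi_of_pos hx, ← Real.rpow_mul hx.le, mul_comm,
    sub_one_mul_hconj_sub_one hp, Real.rpow_one]

end Psi

section PNorm

variable {ι : Type} [Fintype ι] {p : ℝ}

theorem pnorm_const_mul (hp : 0 < p) (c : ℝ) (v : ι → ℝ) :
    pnorm p (fun i => c * v i) = |c| * pnorm p v := by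
  unfold pnorm
  simp_rw [abs_mul, Real.mul_rpow (abs_nonneg c) (abs_nonneg _), ← Finset.mul_sum]
  rw [Real.mul_rpow (by positivity) (by positivity), ← Real.rpow_mul (abs_nonneg c),
    mul_one_div_cancel hp.ne', Real.rpow_one]

theorem pnorm_pos [Nonempty ι] {v : ι → ℝ} (hv : ∀ i, 0 < v i) : 0 < pnorm p v :=
  Real.rpow_pos_of_pos (Finset.sum_pos
    (fun i _ => Real.rpow_pos_of_pos (abs_pos.mpr (hv i).ne') p) Finset.univ_nonempty) _

theorem pnormM_eq_pnorm_uncurry {κ : Type} [Fintype κ] (x : ι → κ → ℝ) :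
    pnormM p x = pnorm p (Function.uncurry x) := by
  rw [pnormM, pnorm, Fintype.sum_prod_type]
  rfl

end PNorm

theorem exists_eq_mul_psi_iff {ι : Type} [Fintype ι] {p : ℝ} (hp : 1 < p) {v g : ι → ℝ}
    (hv : ∀ i, 0 < v i) (hg : ∀ i, 0 < g i) :
    (∃ c, ∀ i, g i = c * psi p (v i)) ↔
      ∀ i, pnorm p v * psi (hconj p) (g i) / pnorm p (fun j => psi (hconj p) (g j)) = v i := by
  constructor
  · rintro ⟨c, hc⟩ i
    have hc_pos : 0 < c := pos_of_mul_pos_left (hc i ▸ hg i) (psi_pos (hv i)).le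
    have hpsi_g : ∀ j, psi (hconj p) (g j) = psi (hconj p) c * v j := fun j => by
      rw [hc j, psi_mul_of_pos hc_pos (psi_pos (hv j)), psi_hconj_psi_of_pos hp (hv j)]
    have hpsi_c := psi_pos (p := hconj p) hc_pos
    have : Nonempty ι := ⟨i⟩
    have hP := pnorm_pos (p := p) hv
    simp only [hpsi_g]
    rw [pnorm_const_mul (by linarith) _ v, abs_of_pos hpsi_c]
    field_simp
  · intro hfix
    set P := pnorm p v
    set N := pnorm p (fun j => psi (hconj p) (g j))
    refine ⟨psi p (N / P), fun i => ?_⟩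
    have hvi := hfix i
    have hP : P ≠ 0 := by rintro hP; simpa [hP, ← hvi] using hv i
    have hN : N ≠ 0 := by rintro hN; simpa [hN, ← hvi] using hv i
    have hpsi_g : psi (hconj p) (g i) = N / P * v i := by
      rw [← hvi]
      field_simp
    have hNP : 0 < N / P := pos_of_mul_pos_left (hpsi_g ▸ psi_pos (hg i)) (hv i).le
    rw [← psi_psi_hconj_of_pos hp (hg i), hpsi_g, psi_mul_of_pos hNP (hv i)]

theorem statement2_general {K n1 d : ℕ}
    (pw pu : ℝ) (hpw : 1 < pw) (hpu : 1 < pu)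
    (ρw ρu : ℝ)
    (Φ : PV K n1 d → ℝ)
    (hgrad : ∀ z ∈ Spp K n1 d pw pu ρw ρu,
      (∀ i j, 0 < gradW Φ z i j) ∧ (∀ a b, 0 < gradU Φ z a b))
    (z : PV K n1 d) (hz : z ∈ Spp K n1 d pw pu ρw ρu) :
    (∃ (lam : Fin K → ℝ) (lamu : ℝ),
        (∀ j b, gradW Φ z j b = lam j * psi pw (z.1 j b)) ∧
        (∀ a b, gradU Φ z a b = lamu * psi pu (z.2 a b))) ↔
      GPhi pw pu ρw ρu Φ z = z := by
  obtain ⟨hgw, hgu⟩ := hgrad z hz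
  obtain ⟨hw, hu, hnw, hnu⟩ := hz
  have hrows : ∀ i, (∃ c, ∀ b, gradW Φ z i b = c * psi pw (z.1 i b)) ↔
      ∀ b, (GPhi pw pu ρw ρu Φ z).1 i b = z.1 i b := fun i => by
    rw [GPhi, ← hnw i]
    exact exists_eq_mul_psi_iff hpw (hw i) (hgw i)
  have hmat : (∃ c, ∀ a b, gradU Φ z a b = c * psi pu (z.2 a b)) ↔
      ∀ a b, (GPhi pw pu ρw ρu Φ z).2 a b = z.2 a b := by
    have h := exists_eq_mul_psi_iff hpu (v := Function.uncurry z.2)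
      (g := Function.uncurry (gradU Φ z)) (fun ab => hu ab.1 ab.2) (fun ab => hgu ab.1 ab.2)
    rw [GPhi, ← hnu, pnormM_eq_pnorm_uncurry, pnormM_eq_pnorm_uncurry]
    simp only [Prod.forall, Function.uncurry_apply_pair] at h
    exact h
  simp only [Prod.ext_iff, funext_iff, ← hrows, ← hmat, Classical.skolem, exists_and_left,
    exists_and_right]

/-- For `Φ` with strictly positive gradient on `S₊₊`, a point of `S₊₊` is a
constrained critical point of `Φ` iff it is a fixed point of `G^Φ`. -/
theorem statement2 {K n1 d : ℕ}
    (pw pu : ℝ) (hpw : 1 < pw) (hpu : 1 < pu)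
    (ρw ρu : ℝ) (hρw : 0 < ρw) (hρu : 0 < ρu)
    (Φ : PV K n1 d → ℝ) (hΦ : Differentiable ℝ Φ)
    (hgrad : ∀ z ∈ Spp K n1 d pw pu ρw ρu,
      (∀ i j, 0 < gradW Φ z i j) ∧ (∀ a b, 0 < gradU Φ z a b))
    (z : PV K n1 d) (hz : z ∈ Spp K n1 d pw pu ρw ρu) :
    (∃ (lam : Fin K → ℝ) (lamu : ℝ),
        (∀ j b, gradW Φ z j b = lam j * psi pw (z.1 j b)) ∧
        (∀ a b, gradU Φ z a b = lamu * psi pu (z.2 a b))) ↔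
      GPhi pw pu ρw ρu Φ z = z :=
  statement2_general pw pu hpw hpu ρw ρu Φ hgrad z hz
end

section
/- For p ∈ (1,∞) and ρ > 0, the set X = {z ∈ ℝ^n_{++} : ‖z‖_p ≤ ρ} equipped with the Thompson metric d(z, z̃) = ‖ln(z) − ln(z̃)‖_∞ is a complete metric space; that is, every Cauchy sequence in X with respect to d converges with respect to d to a limit that belongs to X. -/
open Real Filter Topology

/- The coordinatewise logarithm is an isometry from the positive orthant with the Thompson
metric onto `ℝⁿ` with the sup norm, which is complete; the `p`-norm ball is closed because
`pnorm p` is continuous, so the limit `exp L` of a Cauchy sequence stays in it. -/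

theorem continuous_pnorm {ι : Type} [Fintype ι] {p : ℝ} (hp : 0 ≤ p) :
    Continuous (pnorm p : (ι → ℝ) → ℝ) := by
  unfold pnorm
  refine Continuous.rpow_const ?_ fun _ => Or.inr (one_div_nonneg.2 hp)
  exact continuous_finsetSum _ fun i _ =>
    ((continuous_apply i).abs).rpow_const fun _ => Or.inr hp

theorem tendsto_of_tendsto_log {ι : Type} {z : ℕ → ι → ℝ} (hz : ∀ k i, 0 < z k i)
    {L : ι → ℝ} (hL : Tendsto (fun k i => log (z k i)) atTop (𝓝 L)) :
    Tendsto z atTop (𝓝 fun i => exp (L i)) := by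
  have hexp : Continuous fun x : ι → ℝ => fun i => exp (x i) := by fun_prop
  convert (hexp.tendsto L).comp hL using 1
  ext k i
  exact (exp_log (hz k i)).symm

theorem statement3_general {n : ℕ} (p : ℝ) (hp : 1 < p) (ρ : ℝ)
    (z : ℕ → Fin n → ℝ)
    (hz : ∀ k, (∀ i, 0 < z k i) ∧ pnorm p (z k) ≤ ρ)
    (hcauchy : ∀ ε > (0 : ℝ), ∃ N, ∀ k ≥ N, ∀ l ≥ N,
      ‖(fun i : Fin n => Real.log (z k i) - Real.log (z l i))‖ < ε) :
    ∃ w : Fin n → ℝ, (∀ i, 0 < w i) ∧ pnorm p w ≤ ρ ∧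
      ∀ ε > (0 : ℝ), ∃ N, ∀ k ≥ N,
        ‖(fun i : Fin n => Real.log (z k i) - Real.log (w i))‖ < ε := by
  have hlog : CauchySeq fun k i => log (z k i) := Metric.cauchySeq_iff.2 fun ε hε => by
    simpa only [dist_eq_norm, Pi.sub_def] using hcauchy ε hε
  obtain ⟨L, hL⟩ := cauchySeq_tendsto_of_complete hlog
  have hball : IsClosed {x : Fin n → ℝ | pnorm p x ≤ ρ} :=
    isClosed_le (continuous_pnorm (zero_le_one.trans hp.le)) continuous_const
  refine ⟨fun i => exp (L i), fun i => exp_pos _, ?_, fun ε hε => ?_⟩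
  · exact hball.mem_of_tendsto (tendsto_of_tendsto_log (fun k => (hz k).1) hL)
      (Eventually.of_forall fun k => (hz k).2)
  · obtain ⟨N, hN⟩ := Metric.tendsto_atTop.1 hL ε hε
    exact ⟨N, fun k hk => by simpa only [log_exp, dist_eq_norm, Pi.sub_def] using hN k hk⟩

/-- The intersection of the positive orthant with a closed `p`-norm ball is a
complete metric space for the Thompson metric: every Cauchy sequence converges in the set. -/
theorem statement3 {n : ℕ} (p : ℝ) (hp : 1 < p) (ρ : ℝ) (hρ : 0 < ρ)
    (z : ℕ → Fin n → ℝ)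
    (hz : ∀ k, (∀ i, 0 < z k i) ∧ pnorm p (z k) ≤ ρ)
    (hcauchy : ∀ ε > (0 : ℝ), ∃ N, ∀ k ≥ N, ∀ l ≥ N,
      ‖(fun i : Fin n => Real.log (z k i) - Real.log (z l i))‖ < ε) :
    ∃ w : Fin n → ℝ, (∀ i, 0 < w i) ∧ pnorm p w ≤ ρ ∧
      ∀ ε > (0 : ℝ), ∃ N, ∀ k ≥ N,
        ‖(fun i : Fin n => Real.log (z k i) - Real.log (w i))‖ < ε :=
  statement3_general p hp ρ z hz hcauchy
end
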